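/- arXiv:1705.06902 — 5 statements merged into one kernel-verified Lean document; each statement's English description precedes it below -/
import Mathlib

section
/- Let n ≥ 3 and α be positive integers with gcd(n, α) = 1, and let H = ⟨n, n+α, n+2α, ..., n+(n-1)α⟩. Then the set of pseudo-Frobenius numbers of H is exactly {α, 2α, ..., (n-1)α}. -/
/-- The numerical semigroup (as a subset of ℤ) generated by `a`. -/
def SgGen {n : ℕ} (a : Fin n → ℕ) : Set ℤ :=
  {x | ∃ c : Fin n → ℕ, x = ∑ i, (c i : ℤ) * a i}

/-- `α` is a pseudo-Frobenius number of `⟨a⟩`. -/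
def IsPF {n : ℕ} (a : Fin n → ℕ) (α : ℤ) : Prop :=
  α ∉ SgGen a ∧ ∀ i, α + a i ∈ SgGen a

/-- `a` minimally generates: no generator is a combination of the others. -/
def MinGen {n : ℕ} (a : Fin n → ℕ) : Prop :=
  ∀ i, ¬ ∃ c : Fin n → ℕ, c i = 0 ∧ (a i : ℤ) = ∑ j, (c j : ℤ) * a j

lemma sg_add {n : ℕ} {a : Fin n → ℕ} {x y : ℤ} (hx : x ∈ SgGen a) (hy : y ∈ SgGen a) :
    x + y ∈ SgGen a := by
  obtain ⟨c, rfl⟩ := hx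
  obtain ⟨d, rfl⟩ := hy
  refine ⟨c + d, ?_⟩
  rw [← Finset.sum_add_distrib]
  congr 1; ext i
  simp only [Pi.add_apply]
  push_cast
  ring

lemma sg_gen {n : ℕ} {a : Fin n → ℕ} (i : Fin n) : ((a i : ℤ)) ∈ SgGen a := by
  refine ⟨fun j => if j = i then 1 else 0, ?_⟩
  rw [Finset.sum_eq_single i]
  · simp
  · intro b _ hb; simp [hb]
  · simp

lemma knj_mem {n α : ℕ} (hn : 1 ≤ n) (k j : ℕ) (hj : j ≤ k * (n - 1)) :
    ((k : ℤ) * n + j * α) ∈ SgGen (fun i : Fin n => n + i * α) := by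
  induction k generalizing j with
  | zero =>
      simp only [Nat.zero_mul, Nat.le_zero] at hj
      subst hj
      exact ⟨0, by simp⟩
  | succ k ih =>
      set m := min j (n - 1) with hm
      have hmn : m < n := lt_of_le_of_lt (min_le_right _ _) (by omega)
      have hmj : m ≤ j := min_le_left _ _
      have hrest : j - m ≤ k * (n - 1) := by
        have hexp : (k + 1) * (n - 1) = k * (n - 1) + (n - 1) := by ring
        rcases le_or_gt j (n - 1) with h | h
        · simp [hm, min_eq_left h]
        · have : m = n - 1 := min_eq_right h.le
          omega
      have h1 := ih (j - m) hrest
      have h2 := sg_gen (a := fun i : Fin n => n + i * α) ⟨m, hmn⟩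
      have h3 := sg_add h1 h2
      have heq : ((k : ℤ) * n + ((j - m : ℕ) : ℤ) * α) +
          (((fun i : Fin n => n + i * α) ⟨m, hmn⟩ : ℕ) : ℤ)
          = ((k + 1 : ℕ) : ℤ) * n + (j : ℤ) * α := by
        push_cast [Nat.cast_sub hmj]
        ring
      rwa [heq] at h3

lemma mem_sg_iff {n α : ℕ} (hn : 1 ≤ n) (x : ℤ) :
    x ∈ SgGen (fun i : Fin n => n + i * α) ↔
      ∃ k j : ℕ, j ≤ k * (n - 1) ∧ x = (k : ℤ) * n + j * α := by
  constructor
  · rintro ⟨c, rfl⟩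
    refine ⟨∑ i, c i, ∑ i, c i * i.val, ?_, ?_⟩
    · calc ∑ i, c i * i.val ≤ ∑ i : Fin n, c i * (n - 1) := by
            apply Finset.sum_le_sum
            intro i _
            exact Nat.mul_le_mul_left _ (by omega)
          _ = (∑ i, c i) * (n - 1) := (Finset.sum_mul _ _ _).symm
    · have h : ∀ i : Fin n, (c i : ℤ) * (((n + i * α : ℕ) : ℤ)) =
          (c i : ℤ) * n + ((c i * i.val : ℕ) : ℤ) * α := by
        intro i; push_cast; ring
      rw [Finset.sum_congr rfl (fun i _ => h i), Finset.sum_add_distrib,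
        ← Finset.sum_mul]
      push_cast
      rw [← Finset.sum_mul]
  · rintro ⟨k, j, hj, rfl⟩
    exact knj_mem hn k j hj

/-- `r·α ∉ H` for `1 ≤ r ≤ n-1`. -/
lemma notMem_ra {n α : ℕ} (hn : 3 ≤ n) (hα : 0 < α) (hgcd : Nat.gcd n α = 1)
    {r : ℕ} (hr1 : 1 ≤ r) (hr2 : r ≤ n - 1) :
    ((r : ℤ) * α) ∉ SgGen (fun i : Fin n => n + i * α) := by
  rw [mem_sg_iff (by omega)]
  rintro ⟨k, j, hj, heq⟩
  have key : ((r : ℤ) - j) * α = k * n := by linarith [heq]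
  rcases Nat.eq_zero_or_pos k with hk | hk
  · subst hk
    simp only [Nat.zero_mul, Nat.le_zero] at hj
    subst hj
    simp only [Nat.cast_zero, zero_mul, zero_add] at heq
    have : (r : ℤ) * α > 0 := by positivity
    omega
  · have hpos : (0 : ℤ) < k * n := by positivity
    have hrj : (j : ℤ) < r := by
      by_contra h
      push_neg at h
      nlinarith [key]
    have hdvd : (n : ℤ) ∣ ((r : ℤ) - j) * α := ⟨k, by linarith [key]⟩
    have hcop : IsCoprime (n : ℤ) (α : ℤ) := by
      rw [Int.isCoprime_iff_gcd_eq_one]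
      simpa using hgcd
    have hd : (n : ℤ) ∣ ((r : ℤ) - j) := hcop.dvd_of_dvd_mul_right hdvd
    have h1 : (0 : ℤ) < (r : ℤ) - j := by omega
    have hle := Int.le_of_dvd h1 hd
    omega

theorem stmt5 (n α : ℕ) (hn : 3 ≤ n) (hα : 0 < α) (hgcd : Nat.gcd n α = 1) :
    {γ : ℤ | IsPF (fun i : Fin n => n + i * α) γ} =
      {γ : ℤ | ∃ r : ℕ, 1 ≤ r ∧ r ≤ n - 1 ∧ γ = (r : ℤ) * α} := by
  ext γ
  simp only [Set.mem_setOf_eq]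
  constructor
  · rintro ⟨hnotin, hall⟩
    -- use i = 0 : γ + n ∈ H
    have h0 := hall ⟨0, by omega⟩
    simp only [Fin.val_mk, Nat.zero_mul, Nat.add_zero] at h0
    rw [mem_sg_iff (by omega)] at h0
    -- minimal j representation
    have hex : ∃ j, ∃ k, j ≤ k * (n - 1) ∧ γ + (n : ℤ) = (k : ℤ) * n + j * α := by
      obtain ⟨k, j, hj, he⟩ := h0
      exact ⟨j, k, hj, he⟩
    classical
    obtain ⟨k, hk, he⟩ := Nat.find_spec hex
    set j := Nat.find hex with hjdef
    clear_value j
    -- j ≤ n - 1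
    have hjle : j ≤ n - 1 := by
      by_contra hlt
      push_neg at hlt
      have hjn : n ≤ j := by omega
      have : ∃ k', (j - n) ≤ k' * (n - 1) ∧
          γ + (n : ℤ) = (k' : ℤ) * n + (j - n : ℕ) * α := by
        refine ⟨k + α, ?_, ?_⟩
        · have : j ≤ k * (n - 1) := hk
          nlinarith [Nat.sub_le j n]
        · rw [he]
          push_cast [Nat.cast_sub hjn]
          ring
      exact absurd this (Nat.find_min hex (by omega))
    -- k ≥ 1
    have hk1 : 1 ≤ k := by
      by_contra hk0
      push_neg at hk0
      interval_cases k
      · have hj0 : j = 0 := by omega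
        have h1 := hall ⟨1, by omega⟩
        have hγ : γ = -(n : ℤ) := by
          rw [hj0] at he; push_cast at he ⊢; linarith
        subst hγ
        have : ((1 : ℕ) : ℤ) * α ∈ SgGen (fun i : Fin n => n + i * α) := by
          convert h1 using 1
          push_cast
          ring
        exact notMem_ra hn hα hgcd le_rfl (by omega) this
    -- k = 1, else γ ∈ H
    have hk2 : k = 1 := by
      by_contra hk2
      have hk2' : 2 ≤ k := by omega
      apply hnotin
      rw [mem_sg_iff (by omega)]
      refine ⟨k - 1, j, ?_, ?_⟩
      · calc j ≤ n - 1 := hjle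
          _ ≤ (k - 1) * (n - 1) := Nat.le_mul_of_pos_left _ (by omega)
      · have : γ = (k : ℤ) * n + j * α - n := by push_cast at he ⊢; linarith
        rw [this]
        push_cast [Nat.cast_sub (by omega : 1 ≤ k)]
        ring
    subst hk2
    have hγ : γ = (j : ℤ) * α := by push_cast at he ⊢; linarith
    have hj1 : 1 ≤ j := by
      by_contra h
      push_neg at h
      interval_cases j
      · simp at hγ
        exact hnotin (hγ ▸ ⟨0, by simp⟩)
    exact ⟨j, hj1, hjle, hγ⟩
  · rintro ⟨r, hr1, hr2, rfl⟩
    refine ⟨notMem_ra hn hα hgcd hr1 hr2, ?_⟩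
    intro i
    rw [mem_sg_iff (by omega)]
    rcases le_or_gt (r + i.val) (n - 1) with h | h
    · refine ⟨1, r + i.val, by omega, ?_⟩
      push_cast
      ring
    · have hge : n ≤ r + i.val := by omega
      refine ⟨1 + α, r + i.val - n, ?_, ?_⟩
      · exact le_trans (by omega : r + i.val - n ≤ n - 1)
          (Nat.le_mul_of_pos_left _ (by omega))
      · push_cast [Nat.cast_sub hge]
        ring
end

section
/- Let H = ⟨a_1, ..., a_n⟩ with gcd(a_1,...,a_n) = 1, let α be a pseudo-Frobenius number of H, and let M = (m_{ij}) be an RF-matrix associated to α. If the first column of M has all off-diagonal entries zero (m_{i1} = 0 for all i ≠ 1), then gcd(a_2, ..., a_n) = 1 and α is a pseudo-Frobenius number of the numerical semigroup H' = ⟨a_2, ..., a_n⟩. -/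
theorem stmt9 {n : ℕ} (hn : 2 ≤ n) (a : Fin (n + 1) → ℕ) (ha : ∀ i, 0 < a i)
    (hgcd : Finset.univ.gcd a = 1) (hmin : MinGen a)
    (α : ℤ) (hα : IsPF a α)
    (M : Matrix (Fin (n + 1)) (Fin (n + 1)) ℤ)
    (hMd : ∀ i, M i i = -1) (hMo : ∀ i j, i ≠ j → 0 ≤ M i j)
    (hMα : ∀ i, ∑ j, M i j * a j = α)
    (hcol : ∀ i, i ≠ 0 → M i 0 = 0) :
    Finset.univ.gcd (a ∘ Fin.succ) = 1 ∧ IsPF (a ∘ Fin.succ) α := by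
  have hsub : SgGen (a ∘ Fin.succ) ⊆ SgGen a := by
    rintro x ⟨c, rfl⟩
    exact ⟨Fin.cases 0 c, by simp [Fin.sum_univ_succ]⟩
  have hrow : ∀ r : Fin (n+1),
      α = M r 0 * a 0 + ∑ j : Fin n, M r j.succ * a j.succ := by
    intro r
    rw [← hMα r, Fin.sum_univ_succ]
  -- sum over a' divisible by d
  set d := Finset.univ.gcd (a ∘ Fin.succ) with hd
  have hdvd' : ∀ j : Fin n, (d : ℤ) ∣ (a j.succ : ℤ) := fun j =>
    Int.natCast_dvd_natCast.mpr (Finset.gcd_dvd (Finset.mem_univ j))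
  have hdS : ∀ r : Fin (n+1), (d : ℤ) ∣ ∑ j : Fin n, M r j.succ * a j.succ :=
    fun r => Finset.dvd_sum fun j _ => Dvd.dvd.mul_left (hdvd' j) _
  let r1 : Fin (n+1) := ⟨1, by omega⟩
  have hr1 : r1 ≠ 0 := by
    intro h
    have := congrArg Fin.val h
    simp [r1] at this
  have hdα : (d : ℤ) ∣ α := by
    have h := hrow r1
    rw [hcol r1 hr1, zero_mul, zero_add] at h
    rw [h]; exact hdS r1
  have hda0 : (d : ℤ) ∣ (a 0 : ℤ) := by
    have h := hrow 0
    rw [hMd 0] at h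
    have h2 : (a 0 : ℤ) = (∑ j : Fin n, M 0 j.succ * a j.succ) - α := by linarith
    rw [h2]; exact dvd_sub (hdS 0) hdα
  have hdall : ∀ i : Fin (n+1), d ∣ a i := by
    intro i
    induction i using Fin.cases with
    | zero => exact Int.natCast_dvd_natCast.mp hda0
    | succ j => exact Finset.gcd_dvd (Finset.mem_univ j)
  have hd1 : d = 1 := by
    have : d ∣ Finset.univ.gcd a := Finset.dvd_gcd fun i _ => hdall i
    rw [hgcd] at this
    exact Nat.dvd_one.mp this
  refine ⟨hd1, fun h => hα.1 (hsub h), fun i => ?_⟩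
  -- α + a (i.succ) ∈ SgGen a'
  refine ⟨fun j => if j = i then 0 else (M i.succ j.succ).toNat, ?_⟩
  have h0 : M i.succ 0 = 0 := hcol _ (Fin.succ_ne_zero i)
  have hr := hrow i.succ
  rw [h0, zero_mul, zero_add] at hr
  have hpt : ∀ j : Fin n,
      ((if j = i then 0 else (M i.succ j.succ).toNat : ℕ) : ℤ) * ((a ∘ Fin.succ) j : ℤ)
        = M i.succ j.succ * a j.succ - (if j = i then M i.succ j.succ * a j.succ else 0) := by
    intro j
    by_cases hji : j = i
    · subst hji; simp
    · have hnn : 0 ≤ M i.succ j.succ :=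
        hMo i.succ j.succ fun h => hji (Fin.succ_injective n h).symm
      simp [hji, Int.toNat_of_nonneg hnn]
  rw [Finset.sum_congr rfl fun j _ => hpt j, Finset.sum_sub_distrib,
    Finset.sum_ite_eq' Finset.univ i fun j => M i.succ j.succ * a j.succ]
  simp only [Finset.mem_univ, if_true, ← hr, hMd i.succ, Function.comp_apply]
  ring
end

section
/- Let I ⊆ S = k[x_1, ..., x_n] be the toric defining ideal of k[H] for a numerical semigroup H minimally generated by a_1, ..., a_n (n ≥ 3), and suppose I = I_2 of the 2×n matrix with rows (f_1, ..., f_n) and (x_1, ..., x_n) for homogeneous f_i ∈ (x_1, ..., x_n). Then f_i ∉ I for every i. -/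
open MvPolynomial in
/-- The ideal of polynomials all of whose monomials have total degree ≥ N. -/
def lowIdeal (σ : Type*) (k : Type*) [CommRing k] [DecidableEq σ] (N : ℕ) :
    Ideal (MvPolynomial σ k) where
  carrier := {p | ∀ s ∈ p.support, N ≤ s.sum fun _ e => e}
  zero_mem' := by simp
  add_mem' := by
    intro p q hp hq s hs
    rcases Finset.mem_union.mp (MvPolynomial.support_add hs) with h | h
    · exact hp s h
    · exact hq s h
  smul_mem' := by
    intro r p hp s hs
    have hsub := MvPolynomial.support_mul r p hs
    rw [Finset.mem_add] at hsub
    obtain ⟨u, hu, v, hv, rfl⟩ := hsub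
    have := hp v hv
    rw [Finsupp.sum_add_index (by simp) (by intros; rfl)]
    omega

open MvPolynomial in
theorem mem_lowIdeal {σ : Type*} {k : Type*} [CommRing k] [DecidableEq σ] {N : ℕ}
    {p : MvPolynomial σ k} :
    p ∈ lowIdeal σ k N ↔ ∀ s ∈ p.support, N ≤ s.sum fun _ e => e := Iff.rfl

open MvPolynomial in
theorem lowIdeal_pow_le (σ : Type*) (k : Type*) [CommRing k] [Nontrivial k] [DecidableEq σ] (N : ℕ) :
    Ideal.span (Set.range (X : σ → MvPolynomial σ k)) ^ N ≤ lowIdeal σ k N := by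
  induction N with
  | zero =>
    rw [pow_zero, Ideal.one_eq_top]
    intro p _
    rw [mem_lowIdeal]
    intro s _
    exact Nat.zero_le _
  | succ N ih =>
    rw [pow_succ]
    refine Ideal.mul_le.mpr fun p hp q hq => ?_
    have hp' : p ∈ lowIdeal σ k N := ih hp
    have hq' : q ∈ lowIdeal σ k 1 := by
      refine Ideal.span_le.mpr ?_ hq
      rintro _ ⟨i, rfl⟩
      rw [SetLike.mem_coe, mem_lowIdeal]
      intro s hs
      rw [MvPolynomial.support_X] at hs
      simp only [Finset.mem_singleton] at hs
      subst hs
      simp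
    rw [mem_lowIdeal]
    intro s hs
    rw [mem_lowIdeal] at hp' hq'
    have hsub := MvPolynomial.support_mul p q hs
    rw [Finset.mem_add] at hsub
    obtain ⟨u, hu, v, hv, rfl⟩ := hsub
    have h1 := hp' u hu
    have h2 := hq' v hv
    rw [Finsupp.sum_add_index (by simp) (by intros; rfl)]
    omega

open MvPolynomial in
theorem stmt13 {n : ℕ} (hn : 3 ≤ n) (k : Type*) [Field k]
    (a : Fin n → ℕ) (ha : ∀ i, 0 < a i)
    (hgcd : Finset.univ.gcd a = 1) (hmin : MinGen a)
    (φ : MvPolynomial (Fin n) k →ₐ[k] Polynomial k)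
    (hφ : ∀ i, φ (X i) = Polynomial.X ^ a i)
    (f : Fin n → MvPolynomial (Fin n) k)
    (d : Fin n → ℕ)
    (hhom : ∀ i, (f i).IsWeightedHomogeneous a (d i))
    (hmem : ∀ i, f i ∈ Ideal.span (Set.range (X : Fin n → MvPolynomial (Fin n) k)))
    (hI : RingHom.ker φ.toRingHom =
      Ideal.span {g | ∃ i j : Fin n, g = X i * f j - X j * f i}) :
    ∀ i, f i ∉ RingHom.ker φ.toRingHom := by
  intro i0 hf
  set m : Ideal (MvPolynomial (Fin n) k) :=
    Ideal.span (Set.range (X : Fin n → MvPolynomial (Fin n) k)) with hm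
  have hXm : ∀ i, X i ∈ m := fun i => Ideal.subset_span ⟨i, rfl⟩
  have hprime : (RingHom.ker φ.toRingHom).IsPrime := RingHom.ker_isPrime _
  have hXnotker : ∀ i, X i ∉ RingHom.ker φ.toRingHom := by
    intro i hi
    rw [RingHom.mem_ker] at hi
    have : φ (X i) = 0 := hi
    rw [hφ i] at this
    exact pow_ne_zero _ Polynomial.X_ne_zero this
  -- all f j are in the kernel
  have hall : ∀ j, f j ∈ RingHom.ker φ.toRingHom := by
    intro j
    have hgen : X i0 * f j - X j * f i0 ∈ RingHom.ker φ.toRingHom := by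
      rw [hI]; exact Ideal.subset_span ⟨i0, j, rfl⟩
    have h2 : X j * f i0 ∈ RingHom.ker φ.toRingHom := Ideal.mul_mem_left _ _ hf
    have h3 : X i0 * f j ∈ RingHom.ker φ.toRingHom := by
      have := add_mem hgen h2
      simpa using this
    rcases hprime.mem_or_mem h3 with h | h
    · exact absurd h (hXnotker i0)
    · exact h
  -- the kernel is contained in every power of m
  have hker_pow : ∀ N, RingHom.ker φ.toRingHom ≤ m ^ N := by
    intro N
    induction N with
    | zero => rw [pow_zero, Ideal.one_eq_top]; exact le_top
    | succ N ih =>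
      rw [hI, pow_succ]
      refine Ideal.span_le.mpr ?_
      rintro _ ⟨i, j, rfl⟩
      refine sub_mem ?_ ?_
      · rw [mul_comm (X i) (f j)]; exact Ideal.mul_mem_mul (ih (hall j)) (hXm i)
      · rw [mul_comm (X j) (f i)]; exact Ideal.mul_mem_mul (ih (hall i)) (hXm j)
  -- produce a nonzero element of the kernel
  set i0A : Fin n := ⟨0, by omega⟩ with hi0A
  set i1A : Fin n := ⟨1, by omega⟩ with hi1A
  have h01 : i0A ≠ i1A := by
    intro h
    have := congrArg Fin.val h
    simp [hi0A, hi1A] at this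
  set g : MvPolynomial (Fin n) k := X i0A ^ a i1A - X i1A ^ a i0A with hg
  have hgker : g ∈ RingHom.ker φ.toRingHom := by
    rw [RingHom.mem_ker]
    show φ g = 0
    rw [hg, map_sub, map_pow, map_pow, hφ i0A, hφ i1A, ← pow_mul, ← pow_mul,
      Nat.mul_comm, sub_self]
  have hgne : g ≠ 0 := by
    intro h
    have hc : MvPolynomial.coeff (Finsupp.single i0A (a i1A)) g = 1 := by
      rw [hg, MvPolynomial.coeff_sub, MvPolynomial.X_pow_eq_monomial,
        MvPolynomial.X_pow_eq_monomial, MvPolynomial.coeff_monomial,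
        MvPolynomial.coeff_monomial, if_pos rfl, if_neg, sub_zero]
      intro heq
      have h2 := DFunLike.congr_fun heq i1A
      rw [Finsupp.single_apply, Finsupp.single_apply, if_pos rfl,
        if_neg h01] at h2
      exact (ha i0A).ne' h2
    rw [h] at hc
    simp at hc
  obtain ⟨s, hs⟩ := (MvPolynomial.support_nonempty.mpr hgne)
  set N : ℕ := (s.sum fun _ e => e) + 1 with hN
  have hmN : g ∈ m ^ N := hker_pow N hgker
  have hlow : N ≤ s.sum fun _ e => e := mem_lowIdeal.mp (lowIdeal_pow_le (Fin n) k N hmN) s hs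
  omega
end

section
/- Let H = ⟨a_1, ..., a_n⟩ (n ≥ 3, minimally generated) and suppose there exists a pseudo-Frobenius number α of H with (n-1)α ∉ H. Then PF(H) = {α, 2α, ..., (n-1)α}; in particular the Frobenius number of H is (n-1)α and H has type n-1. -/
/-!
Since `α + aᵢ` is a nonzero element of `H`, some generator `a_{f i}` with `f i ≠ i` can be
removed from it. Chaining these steps gives `tα + aᵢ - a_{fᵗ i} ∈ H`, and because no multiple
`tα` with `0 < t < n` lies in `H`, `f` is an `n`-cycle and `f i` is the only generator that can be
removed from `α + aᵢ`: thus `α + aᵢ = λᵢ a_{σ i}` for a fixed-point-free permutation `σ`.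
Then an element `x = ∑ cₘ aₘ` of `H` with `x - α ∉ H` must have `c_{σ j} < λⱼ` for all `j`, so
`nα - x = ∑ (λ_{σ⁻¹ m} - 1 - cₘ) aₘ ∈ H`. For a pseudo-Frobenius `δ` with `δ + α ∈ H` this puts
`(n - 1)α - δ` in `H`, forcing `δ = (n - 1)α`; every pseudo-Frobenius `γ` reaches such a `δ` as
`γ + jα`. The largest gap, which exists because the generators are coprime, is pseudo-Frobenius.
-/

open Finset

section SgGen

variable {n : ℕ} {a : Fin n → ℕ}

lemma nonneg_of_mem_sgGen {x : ℤ} (hx : x ∈ SgGen a) : 0 ≤ x := by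
  obtain ⟨c, rfl⟩ := hx
  positivity

lemma zero_mem_sgGen : (0 : ℤ) ∈ SgGen a := ⟨0, by simp⟩

lemma add_mem_sgGen {x y : ℤ} (hx : x ∈ SgGen a) (hy : y ∈ SgGen a) : x + y ∈ SgGen a := by
  obtain ⟨c, rfl⟩ := hx
  obtain ⟨d, rfl⟩ := hy
  exact ⟨c + d, by simp [add_mul, sum_add_distrib]⟩

lemma sum_mem_sgGen (c : Fin n → ℤ) (hc : ∀ i, 0 ≤ c i) : ∑ i, c i * a i ∈ SgGen a :=
  ⟨fun i => (c i).toNat, by simp [hc]⟩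

lemma natCast_mem_sgGen (i : Fin n) : (a i : ℤ) ∈ SgGen a := by
  simpa [Pi.single_apply] using sum_mem_sgGen (a := a) (Pi.single i 1) fun j => by
    rcases eq_or_ne j i with rfl | h <;> simp [*]

lemma sum_sub_mem_sgGen {c : Fin n → ℕ} {j : Fin n} (hc : c j ≠ 0) :
    ∑ i, (c i : ℤ) * a i - a j ∈ SgGen a := by
  convert sum_mem_sgGen (a := a) (fun i => c i - (Pi.single j 1 : Fin n → ℤ) i) (fun i => ?_)
    using 1
  · simp [sub_mul, sum_sub_distrib, Pi.single_apply]
  · rcases eq_or_ne i j with rfl | h <;> simp [*]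
    omega

lemma exists_sub_mem_sgGen {x : ℤ} (hx : x ∈ SgGen a) (hx0 : x ≠ 0) :
    ∃ i, x - a i ∈ SgGen a := by
  obtain ⟨c, rfl⟩ := hx
  obtain ⟨i, hi⟩ : ∃ i, c i ≠ 0 := by
    by_contra! h
    simp [h] at hx0
  exact ⟨i, sum_sub_mem_sgGen hi⟩

lemma coeff_eq_zero_of_not_mem {γ : ℤ} (hγ : γ ∉ SgGen a) {c : Fin n → ℕ} {i : Fin n}
    (h : γ + a i = ∑ j, (c j : ℤ) * a j) : c i = 0 := by
  by_contra hc
  apply hγ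
  simpa [← h] using sum_sub_mem_sgGen (a := a) hc

lemma natCast_mem_sgGen_of_mem_closure {m : ℕ} (hm : m ∈ AddSubmonoid.closure (Set.range a)) :
    (m : ℤ) ∈ SgGen a := by
  induction hm using AddSubmonoid.closure_induction with
  | mem _ h =>
    obtain ⟨i, rfl⟩ := h
    exact natCast_mem_sgGen i
  | zero => exact zero_mem_sgGen
  | add _ _ _ _ hx hy =>
    push_cast
    exact add_mem_sgGen hx hy

lemma exists_forall_ge_mem_sgGen (hgcd : univ.gcd a = 1) :
    ∃ N : ℤ, ∀ x, N ≤ x → x ∈ SgGen a := by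
  obtain ⟨N, hN⟩ := Nat.exists_mem_closure_of_ge (Set.range a)
  have hdvd : Nat.setGcd (Set.range a) ∣ 1 :=
    hgcd ▸ Finset.dvd_gcd fun i _ => Nat.setGcd_dvd_of_mem ⟨i, rfl⟩
  refine ⟨N, fun x hx => ?_⟩
  have := natCast_mem_sgGen_of_mem_closure (hN x.toNat (by omega) (hdvd.trans (one_dvd _)))
  rwa [Int.toNat_of_nonneg (by omega)] at this

lemma exists_isGreatest_not_mem_sgGen (hgcd : univ.gcd a = 1) {x : ℤ} (hx : x ∉ SgGen a) :
    ∃ g, IsGreatest {m | m ∉ SgGen a} g := by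
  obtain ⟨N, hN⟩ := exists_forall_ge_mem_sgGen hgcd
  obtain ⟨g, hg, hmax⟩ := Int.exists_greatest_of_bdd (P := (· ∉ SgGen a))
    ⟨N, fun m hm => by by_contra h; exact hm (hN m (by omega))⟩ ⟨x, hx⟩
  exact ⟨g, hg, hmax⟩

end SgGen

namespace IsPF

variable {n : ℕ} {a : Fin n → ℕ} {γ α : ℤ}

lemma ne_zero (hγ : IsPF a γ) : γ ≠ 0 := fun h => hγ.1 (h ▸ zero_mem_sgGen)

lemma add_mem (hγ : IsPF a γ) {x : ℤ} (hx : x ∈ SgGen a) (hx0 : x ≠ 0) : γ + x ∈ SgGen a := by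
  obtain ⟨i, hi⟩ := exists_sub_mem_sgGen hx hx0
  simpa using add_mem_sgGen (hγ.2 i) hi

lemma pos (hn : 2 ≤ n) (hmin : MinGen a) (hγ : IsPF a γ) : 0 < γ := by
  by_contra! hγ0
  obtain ⟨i, -, hi⟩ := exists_min_image univ a (univ_nonempty_iff.2 ⟨⟨0, by omega⟩⟩)
  have hγi : γ = -a i := by
    by_contra h
    obtain ⟨k, hk⟩ := exists_sub_mem_sgGen (hγ.2 i) (by omega)
    have := nonneg_of_mem_sgGen hk
    have := hi k (mem_univ k)
    have := hγ.ne_zero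
    omega
  obtain ⟨j, hji⟩ := Fintype.exists_ne_of_one_lt_card (by simp; omega) i
  obtain ⟨c, hc⟩ := hγ.2 j
  refine hmin j ⟨c + Pi.single i 1, ?_, ?_⟩
  · simp [hji, coeff_eq_zero_of_not_mem hγ.1 hc]
  · simp [add_mul, sum_add_distrib, Pi.single_apply, ← hc, hγi]

lemma add_of_not_mem (hγ : IsPF a γ) (hα : IsPF a α) (hα0 : 0 < α) (h : γ + α ∉ SgGen a) :
    IsPF a (γ + α) :=
  ⟨h, fun i => by simpa only [add_assoc] using hγ.add_mem (hα.2 i) (by omega)⟩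

lemma natCast_mul_mem_of_le (hα : IsPF a α) {s t : ℕ} (hs : 0 < s) (hst : s ≤ t)
    (h : (s : ℤ) * α ∈ SgGen a) : (t : ℤ) * α ∈ SgGen a := by
  induction t, hst using Nat.le_induction with
  | base => exact h
  | succ t hst ih =>
    convert hα.add_mem ih (mul_ne_zero (by omega) hα.ne_zero) using 1
    push_cast
    ring

lemma le_of_natCast_mul_mem (hα : IsPF a α) (hout : ((n : ℤ) - 1) * α ∉ SgGen a) {t : ℕ}
    (ht : 0 < t) (h : (t : ℤ) * α ∈ SgGen a) : n ≤ t := by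
  by_contra! htn
  apply hout
  convert hα.natCast_mul_mem_of_le ht (by omega : t ≤ n - 1) h using 2
  omega

end IsPF

lemma isPF_of_isGreatest {n : ℕ} {a : Fin n → ℕ} (ha : ∀ i, 0 < a i) {g : ℤ}
    (hg : IsGreatest {m | m ∉ SgGen a} g) : IsPF a g :=
  ⟨hg.1, fun i => by_contra fun h => by have := hg.2 h; have := ha i; omega⟩

section Successor

variable {n : ℕ} {a : Fin n → ℕ} {α : ℤ} {f : Fin n → Fin n}

lemma natCast_mul_add_sub_iterate_mem (hf : ∀ i, α + a i - a (f i) ∈ SgGen a) (t : ℕ)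
    (i : Fin n) : (t : ℤ) * α + a i - a (f^[t] i) ∈ SgGen a := by
  induction t with
  | zero => simpa using zero_mem_sgGen
  | succ t ih =>
    convert add_mem_sgGen ih (hf (f^[t] i)) using 1
    rw [Function.iterate_succ_apply']
    push_cast
    ring

lemma le_sub_of_iterate_eq (hf : ∀ i, α + a i - a (f i) ∈ SgGen a)
    (hmul : ∀ t : ℕ, 0 < t → (t : ℤ) * α ∈ SgGen a → n ≤ t) {i : Fin n} {s t : ℕ}
    (hst : s < t) (h : f^[s] i = f^[t] i) : n ≤ t - s := by
  refine hmul _ (by omega) ?_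
  have := natCast_mul_add_sub_iterate_mem hf (t - s) (f^[s] i)
  rwa [← Function.iterate_add_apply, Nat.sub_add_cancel hst.le, ← h, add_sub_cancel_right]
    at this

lemma exists_iterate_eq (hf : ∀ i, α + a i - a (f i) ∈ SgGen a)
    (hmul : ∀ t : ℕ, 0 < t → (t : ℤ) * α ∈ SgGen a → n ≤ t) (i k : Fin n) :
    ∃ t < n, f^[t] i = k := by
  have hinj : Function.Injective fun t : Fin n => f^[t] i := by
    intro s t h
    by_contra hne
    rcases lt_or_gt_of_ne (Fin.val_ne_of_ne hne) with hst | hst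
    · have := le_sub_of_iterate_eq hf hmul hst h
      omega
    · have := le_sub_of_iterate_eq hf hmul hst h.symm
      omega
  obtain ⟨t, ht⟩ := Finite.surjective_of_injective hinj k
  exact ⟨t, t.isLt, ht⟩

lemma iterate_eq_self (hf : ∀ i, α + a i - a (f i) ∈ SgGen a)
    (hmul : ∀ t : ℕ, 0 < t → (t : ℤ) * α ∈ SgGen a → n ≤ t) (i : Fin n) : f^[n] i = i := by
  obtain ⟨t, htn, ht⟩ := exists_iterate_eq hf hmul i (f^[n] i)
  rcases Nat.eq_zero_or_pos t with rfl | ht0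
  · exact ht.symm
  · have := le_sub_of_iterate_eq hf hmul htn ht
    omega

lemma eq_of_sub_mem_sgGen (hf : ∀ i, α + a i - a (f i) ∈ SgGen a)
    (hmul : ∀ t : ℕ, 0 < t → (t : ℤ) * α ∈ SgGen a → n ≤ t) {i k : Fin n}
    (h : α + a i - a k ∈ SgGen a) : k = f i := by
  obtain ⟨t, htn, ht⟩ := exists_iterate_eq hf hmul k i
  have hsum := add_mem_sgGen h (natCast_mul_add_sub_iterate_mem hf t k)
  rw [ht] at hsum
  have : n ≤ t + 1 := hmul (t + 1) t.succ_pos (by convert hsum using 1; push_cast; ring)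
  have hk : f^[t + 1] k = f i := by rw [Function.iterate_succ_apply', ht]
  rwa [(by omega : t + 1 = n), iterate_eq_self hf hmul k] at hk

end Successor

lemma IsPF.exists_perm_mul_eq {n : ℕ} {a : Fin n → ℕ} {α : ℤ} (hα : IsPF a α) (hα0 : 0 < α)
    (hmul : ∀ t : ℕ, 0 < t → (t : ℤ) * α ∈ SgGen a → n ≤ t) :
    ∃ σ : Equiv.Perm (Fin n), ∃ lam : Fin n → ℕ,
      (∀ i, σ i ≠ i) ∧ ∀ i, α + a i = lam i * a (σ i) := by
  have hsucc : ∀ i, ∃ k, k ≠ i ∧ α + a i - a k ∈ SgGen a := by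
    intro i
    obtain ⟨k, hk⟩ := exists_sub_mem_sgGen (hα.2 i) (by omega)
    refine ⟨k, ?_, hk⟩
    rintro rfl
    exact hα.1 (by simpa using hk)
  choose f hfi hf using hsucc
  have hinv : Function.LeftInverse f^[n - 1] f := fun i => by
    rw [← Function.iterate_succ_apply, (by have := i.pos; omega : (n - 1).succ = n),
      iterate_eq_self hf hmul i]
  have hlam : ∀ i, ∃ l : ℕ, α + a i = l * a (f i) := by
    intro i
    obtain ⟨c, hc⟩ := hα.2 i
    have hc0 : ∀ k ≠ f i, c k = 0 := by
      intro k hk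
      by_contra hck
      refine hk (eq_of_sub_mem_sgGen hf hmul ?_)
      rw [hc]
      exact sum_sub_mem_sgGen hck
    exact ⟨c (f i), hc.trans (Fintype.sum_eq_single (f i) fun k hk => by simp [hc0 k hk])⟩
  choose lam hlam using hlam
  exact ⟨Equiv.ofBijective f (Finite.injective_iff_bijective.1 hinv.injective), lam, hfi, hlam⟩

section Cycle

variable {n : ℕ} {a : Fin n → ℕ} {α : ℤ} {σ : Equiv.Perm (Fin n)} {lam : Fin n → ℕ}

lemma sum_lam_symm_sub_one_mul (hlam : ∀ i, α + a i = lam i * a (σ i)) :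
    ∑ m, ((lam (σ.symm m) : ℤ) - 1) * a m = n * α := by
  rw [← Equiv.sum_comp σ]
  simp only [Equiv.symm_apply_apply, sub_one_mul, sum_sub_distrib, ← hlam, sum_add_distrib,
    Equiv.sum_comp σ fun m => (a m : ℤ)]
  simp

lemma natCast_mul_sub_mem_sgGen (hσ : ∀ i, σ i ≠ i) (hlam : ∀ i, α + a i = lam i * a (σ i)) {x : ℤ}
    (hx : x ∈ SgGen a) (hxα : x - α ∉ SgGen a) : n * α - x ∈ SgGen a := by
  obtain ⟨c, rfl⟩ := hx
  have hc : ∀ j, c (σ j) < lam j := by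
    intro j
    by_contra! hj
    apply hxα
    convert sum_mem_sgGen (a := a) (fun m => c m - (Pi.single (σ j) (lam j) : Fin n → ℤ) m
      + (Pi.single j 1 : Fin n → ℤ) m) (fun m => ?_) using 1
    · simp [add_mul, sub_mul, sum_add_distrib, sum_sub_distrib, Pi.single_apply]
      linarith [hlam j]
    · simp only [Pi.single_apply]
      split_ifs with h1 h2 h2
      · exact absurd (h1.symm.trans h2) (hσ j)
      · subst h1
        omega
      all_goals omega
  rw [← sum_lam_symm_sub_one_mul hlam, ← sum_sub_distrib]
  convert sum_mem_sgGen (a := a) (fun m => (lam (σ.symm m) : ℤ) - 1 - c m) (fun m => ?_) using 1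
  · simp [sub_mul]
  · have := hc (σ.symm m)
    simp only [Equiv.apply_symm_apply] at this
    omega

lemma eq_of_add_mem_sgGen (hσ : ∀ i, σ i ≠ i) (hlam : ∀ i, α + a i = lam i * a (σ i))
    (hout : ((n : ℤ) - 1) * α ∉ SgGen a) {δ : ℤ} (hδ : IsPF a δ) (h : δ + α ∈ SgGen a) :
    δ = (n - 1) * α := by
  have hsub := natCast_mul_sub_mem_sgGen hσ hlam h (by simpa using hδ.1)
  by_contra hne
  apply hout
  convert hδ.add_mem hsub (fun h0 => hne (by linarith)) using 1
  ring

lemma exists_add_natCast_mul_eq (hσ : ∀ i, σ i ≠ i) (hlam : ∀ i, α + a i = lam i * a (σ i))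
    (hα : IsPF a α) (hα0 : 0 < α) (hout : ((n : ℤ) - 1) * α ∉ SgGen a) (t : ℕ) :
    ∀ {γ : ℤ}, IsPF a γ → γ + t * α ∈ SgGen a → ∃ j : ℕ, γ + j * α = (n - 1) * α := by
  induction t with
  | zero =>
    intro γ hγ h
    exact absurd (by simpa using h) hγ.1
  | succ t ih =>
    intro γ hγ h
    by_cases hγα : γ + α ∈ SgGen a
    · exact ⟨0, by simpa using eq_of_add_mem_sgGen hσ hlam hout hγ hγα⟩
    · obtain ⟨j, hj⟩ := ih (hγ.add_of_not_mem hα hα0 hγα) (by convert h using 1; push_cast; ring)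
      exact ⟨j + 1, by rw [← hj]; push_cast; ring⟩

lemma exists_eq_natCast_mul_of_isPF (hn : 2 ≤ n) (hmin : MinGen a) (hσ : ∀ i, σ i ≠ i)
    (hlam : ∀ i, α + a i = lam i * a (σ i)) (hα : IsPF a α) (hout : ((n : ℤ) - 1) * α ∉ SgGen a)
    {γ : ℤ} (hγ : IsPF a γ) : ∃ r : ℕ, 1 ≤ r ∧ r ≤ n - 1 ∧ γ = r * α := by
  have hα0 := hα.pos hn hmin
  have hγ0 := hγ.pos hn hmin
  have hnα : (n : ℤ) * α ∈ SgGen a := by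
    simpa using natCast_mul_sub_mem_sgGen hσ hlam zero_mem_sgGen
      (fun h => by have := nonneg_of_mem_sgGen h; omega)
  obtain ⟨j, hj⟩ := exists_add_natCast_mul_eq hσ hlam hα hα0 hout n hγ
    (hγ.add_mem hnα (mul_ne_zero (by norm_cast; omega) hα.ne_zero))
  have hjn : (j : ℤ) < n - 1 := by nlinarith
  refine ⟨n - 1 - j, by omega, by omega, ?_⟩
  rw [(by omega : ((n - 1 - j : ℕ) : ℤ) = n - 1 - j)]
  linarith

end Cycle

lemma IsPF.isPF_natCast_mul {n : ℕ} {a : Fin n → ℕ} {α : ℤ} (hα : IsPF a α) (hα0 : 0 < α)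
    (hmul : ∀ t : ℕ, 0 < t → (t : ℤ) * α ∈ SgGen a → n ≤ t) {r : ℕ} (hr : 1 ≤ r)
    (hrn : r ≤ n - 1) : IsPF a (r * α) := by
  induction r, hr using Nat.le_induction with
  | base => simpa using hα
  | succ r hr ih =>
    have hnot : (r : ℤ) * α + α ∉ SgGen a := fun h => by
      have := hmul (r + 1) (by omega) (by convert h using 1; push_cast; ring)
      omega
    convert (ih (by omega)).add_of_not_mem hα hα0 hnot using 1
    push_cast
    ring

lemma ncard_setOf_natCast_mul {α : ℤ} (hα : α ≠ 0) (m : ℕ) :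
    {γ : ℤ | ∃ r : ℕ, 1 ≤ r ∧ r ≤ m ∧ γ = r * α}.ncard = m := by
  have : {γ : ℤ | ∃ r : ℕ, 1 ≤ r ∧ r ≤ m ∧ γ = r * α} =
      (fun r : ℕ => (r : ℤ) * α) '' Set.Icc 1 m := by
    ext γ
    simp [eq_comm, and_assoc]
  rw [this, Set.ncard_image_of_injective _ fun r s h => by simpa [hα] using h, Set.ncard_Icc_nat]
  omega

theorem stmt15 {n : ℕ} (hn : 3 ≤ n) (a : Fin n → ℕ) (ha : ∀ i, 0 < a i)
    (hgcd : Finset.univ.gcd a = 1) (hmin : MinGen a)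
    (α : ℤ) (hα : IsPF a α) (hout : ((n : ℤ) - 1) * α ∉ SgGen a) :
    {γ : ℤ | IsPF a γ} = {γ : ℤ | ∃ r : ℕ, 1 ≤ r ∧ r ≤ n - 1 ∧ γ = (r : ℤ) * α} ∧
    IsGreatest {m : ℤ | m ∉ SgGen a} (((n : ℤ) - 1) * α) ∧
    {γ : ℤ | IsPF a γ}.ncard = n - 1 := by
  have hα0 : 0 < α := hα.pos (by omega) hmin
  have hmul : ∀ t : ℕ, 0 < t → (t : ℤ) * α ∈ SgGen a → n ≤ t :=
    fun _ => hα.le_of_natCast_mul_mem hout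
  obtain ⟨σ, lam, hσ, hlam⟩ := hα.exists_perm_mul_eq hα0 hmul
  have hPF : {γ : ℤ | IsPF a γ} = {γ : ℤ | ∃ r : ℕ, 1 ≤ r ∧ r ≤ n - 1 ∧ γ = r * α} := by
    ext γ
    refine ⟨exists_eq_natCast_mul_of_isPF (by omega) hmin hσ hlam hα hout, ?_⟩
    rintro ⟨r, hr, hrn, rfl⟩
    exact hα.isPF_natCast_mul hα0 hmul hr hrn
  refine ⟨hPF, ⟨hout, fun x hx => ?_⟩, hPF ▸ ncard_setOf_natCast_mul hα.ne_zero (n - 1)⟩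
  obtain ⟨g, hg⟩ := exists_isGreatest_not_mem_sgGen hgcd hout
  obtain ⟨r, -, hrn, rfl⟩ := exists_eq_natCast_mul_of_isPF (by omega) hmin hσ hlam hα hout
    (isPF_of_isGreatest ha hg)
  calc x ≤ r * α := hg.2 hx
    _ ≤ (n - 1) * α := by gcongr; omega
end

section
/- Let H = ⟨a_1, ..., a_n⟩ with α ∈ PF(H) such that rα ∉ H for all 1 ≤ r ≤ n-1, and let M be any RF-matrix associated to α. Then every column of M has at least one strictly positive entry. -/
theorem stmt17 {n : ℕ} (hn : 3 ≤ n) (a : Fin n → ℕ) (ha : ∀ i, 0 < a i)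
    (hgcd : Finset.univ.gcd a = 1) (hmin : MinGen a)
    (α : ℤ) (hα : IsPF a α)
    (hout : ∀ r : ℕ, 1 ≤ r → r ≤ n - 1 → (r : ℤ) * α ∉ SgGen a)
    (M : Matrix (Fin n) (Fin n) ℤ)
    (hMd : ∀ i, M i i = -1) (hMo : ∀ i j, i ≠ j → 0 ≤ M i j)
    (hMα : ∀ i, ∑ j, M i j * a j = α) :
    ∀ j : Fin n, ∃ i : Fin n, 0 < M i j := by
  intro j0
  by_contra hcon
  push_neg at hcon
  have hcol : ∀ i, i ≠ j0 → M i j0 = 0 := fun i hi =>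
    le_antisymm (hcon i) (hMo i j0 hi)
  -- Key inductive claim: no nonempty `U` avoiding `j0` whose rows vanish outside `U`.
  have key : ∀ m : ℕ, ∀ U : Finset (Fin n), U.card ≤ m → U.Nonempty → j0 ∉ U →
      (∀ i ∈ U, ∀ j, j ∉ U → M i j = 0) → False := by
    intro m
    induction m with
    | zero =>
      intro U hcard hne _ _
      have := Finset.card_pos.mpr hne
      omega
    | succ m ih =>
      intro U hcard hne hj0 hI
      by_cases hb : ∀ k ∈ U, ∃ i ∈ U, i ≠ k ∧ M i k ≠ 0
      · -- every column of `U` has a positive entry within `U`: sum the rows of `U`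
        have hUsub : U ⊆ Finset.univ.erase j0 := fun x hx =>
          Finset.mem_erase.mpr ⟨fun h => hj0 (h ▸ hx), Finset.mem_univ x⟩
        have hUle : U.card ≤ n - 1 := by
          have h1 := Finset.card_le_card hUsub
          have h2 : (Finset.univ.erase j0).card = n - 1 := by
            rw [Finset.card_erase_of_mem (Finset.mem_univ j0)]
            simp
          omega
        have hU1 : 1 ≤ U.card := Finset.card_pos.mpr hne
        -- each column sum over U is nonnegative
        have hnn : ∀ j, 0 ≤ ∑ i ∈ U, M i j := by
          intro j
          by_cases hjU : j ∈ U
          · obtain ⟨i1, hi1U, hi1ne, hi1pos⟩ := hb j hjU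
            have h1 : (1 : ℤ) ≤ M i1 j := by
              have := hMo i1 j hi1ne
              omega
            have hjmem : j ∈ U.erase i1 :=
              Finset.mem_erase.mpr ⟨fun h => hi1ne h.symm, hjU⟩
            have e1 : ∑ i ∈ U, M i j = M i1 j + ∑ i ∈ U.erase i1, M i j :=
              (Finset.add_sum_erase _ _ hi1U).symm
            have e2 : ∑ i ∈ U.erase i1, M i j
                = M j j + ∑ i ∈ (U.erase i1).erase j, M i j :=
              (Finset.add_sum_erase _ _ hjmem).symm
            have e3 : 0 ≤ ∑ i ∈ (U.erase i1).erase j, M i j :=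
              Finset.sum_nonneg fun i hi => hMo i j (Finset.ne_of_mem_erase hi)
            have e4 : M j j = -1 := hMd j
            rw [e1, e2, e4]
            linarith
          · have : ∀ i ∈ U, M i j = 0 := fun i hi => hI i hi j hjU
            rw [Finset.sum_congr rfl this]
            simp
        -- the row sum identity
        have hsum : (U.card : ℤ) * α = ∑ j, (∑ i ∈ U, M i j) * a j := by
          have h1 : ∑ i ∈ U, (∑ j, M i j * a j) = ∑ i ∈ U, α :=
            Finset.sum_congr rfl fun i _ => hMα i
          rw [Finset.sum_const, nsmul_eq_mul] at h1
          rw [← h1, Finset.sum_comm]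
          exact Finset.sum_congr rfl fun j _ => (Finset.sum_mul _ _ _).symm
        have hmem : (U.card : ℤ) * α ∈ SgGen a := by
          refine ⟨fun j => (∑ i ∈ U, M i j).toNat, ?_⟩
          rw [hsum]
          refine Finset.sum_congr rfl fun j _ => ?_
          rw [Int.toNat_of_nonneg (hnn j)]
        exact hout U.card hU1 hUle hmem
      · push_neg at hb
        obtain ⟨k, hkU, hkcol⟩ := hb
        have hkcol' : ∀ i ∈ U, i ≠ k → M i k = 0 := fun i hi hik => hkcol i hi hik
        by_cases hU1 : U = {k}
        · -- base case: row k gives α = -a k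
          have hrow : ∀ j, j ≠ k → M k j = 0 := by
            intro j hj
            apply hI k hkU j
            rw [hU1]
            simp [hj]
          have hαeq : α = -(a k : ℤ) := by
            have := hMα k
            rw [Finset.sum_eq_single k] at this
            · rw [hMd k] at this; linarith
            · intro j _ hj
              rw [hrow j hj]; ring
            · intro h; exact absurd (Finset.mem_univ k) h
          have hkj0 : k ≠ j0 := by
            intro h; exact hj0 (h ▸ hkU)
          obtain ⟨c, hc⟩ := hα.2 j0
          -- (a j0 : ℤ) = a k + ∑ c j * a j  impossible by minimality
          have hc' : (a j0 : ℤ) = (a k : ℤ) + ∑ j, (c j : ℤ) * a j := by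
            rw [← hc, hαeq]; ring
          by_cases hcj0 : c j0 = 0
          · apply hmin j0
            refine ⟨Function.update c k (c k + 1), ?_, ?_⟩
            · rw [Function.update_of_ne (Ne.symm hkj0), hcj0]
            · have e1 : ∑ j, ((Function.update c k (c k + 1)) j : ℤ) * a j
                  = ((c k : ℤ) + 1) * a k
                    + ∑ j ∈ Finset.univ.erase k, (c j : ℤ) * a j := by
                rw [← Finset.add_sum_erase _ _ (Finset.mem_univ k)]
                rw [Function.update_self]
                push_cast
                congr 1
                refine Finset.sum_congr rfl fun j hj => ?_
                rw [Function.update_of_ne (Finset.ne_of_mem_erase hj)]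
              have e2 : ∑ j, (c j : ℤ) * a j
                  = (c k : ℤ) * a k + ∑ j ∈ Finset.univ.erase k, (c j : ℤ) * a j :=
                (Finset.add_sum_erase _ _ (Finset.mem_univ k)).symm
              rw [e1, hc']
              rw [e2]
              ring
          · have h1 : (1 : ℤ) ≤ c j0 := by
              have : 0 < c j0 := Nat.pos_of_ne_zero hcj0
              exact_mod_cast this
            have h2 : (c j0 : ℤ) * a j0 ≤ ∑ j, (c j : ℤ) * a j := by
              apply Finset.single_le_sum (f := fun j => (c j : ℤ) * a j)
              · intro j _
                positivity
              · exact Finset.mem_univ j0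
            have h3 : (a j0 : ℤ) ≤ (c j0 : ℤ) * a j0 := by
              have hap : (0 : ℤ) < a j0 := by exact_mod_cast ha j0
              nlinarith
            have hap : (0 : ℤ) < a k := by exact_mod_cast ha k
            linarith
        · -- shrink U by removing k
          have hne' : (U.erase k).Nonempty := by
            rcases Finset.eq_singleton_or_nontrivial hkU with h | h
            · exact absurd h hU1
            · obtain ⟨x, hx, y, hy, hxy⟩ := h
              by_cases hxk : x = k
              · exact ⟨y, Finset.mem_erase.mpr ⟨fun hh => hxy (hxk.trans hh.symm), hy⟩⟩
              · exact ⟨x, Finset.mem_erase.mpr ⟨hxk, hx⟩⟩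
          apply ih (U.erase k) ?_ hne' ?_ ?_
          · have := Finset.card_erase_of_mem hkU
            have := Finset.card_pos.mpr hne
            omega
          · intro h
            exact hj0 (Finset.mem_of_mem_erase h)
          · intro i hi j hj
            have hiU : i ∈ U := Finset.mem_of_mem_erase hi
            have hik : i ≠ k := Finset.ne_of_mem_erase hi
            by_cases hjU : j ∈ U
            · have hjk : j = k := by
                by_contra hjk
                exact hj (Finset.mem_erase.mpr ⟨hjk, hjU⟩)
              rw [hjk]
              exact hkcol' i hiU hik
            · exact hI i hiU j hjU
  -- launch the induction with U = univ \ {j0}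
  apply key (n - 1) (Finset.univ.erase j0)
  · rw [Finset.card_erase_of_mem (Finset.mem_univ j0)]
    simp
  · have : (Finset.univ.erase j0).card = n - 1 := by
      rw [Finset.card_erase_of_mem (Finset.mem_univ j0)]
      simp
    apply Finset.card_pos.mp
    omega
  · simp
  · intro i hi j hj
    have : j = j0 := by
      by_contra h
      exact hj (Finset.mem_erase.mpr ⟨h, Finset.mem_univ j⟩)
    rw [this]
    exact hcol i (Finset.ne_of_mem_erase hi)
end
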